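/- arXiv:2003.05667 — 5 statements merged into one kernel-verified Lean document; each statement's English description precedes it below -/
import Mathlib

section
/- For real numbers a > 0, r > 0 and bounds l, m with −a ≤ l ≤ m ≤ a, define S = {(x,y) ∈ ℝ² : l ≤ x ≤ m, |y| ≤ a, |y − x| ≤ r}. Suppose l + r ≤ a. If (x°, y°) ∈ ℝ² satisfies y° ≥ l + r and x° + y° ≤ 2l + r, then the Euclidean projection of (x°, y°) onto S equals the corner point (l, l + r). -/
/-- `p` is the Euclidean projection of `z` onto `C`. -/
def IsProj {n : ℕ} (C : Set (EuclideanSpace ℝ (Fin n)))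
    (z p : EuclideanSpace ℝ (Fin n)) : Prop :=
  p ∈ C ∧ ∀ w ∈ C, dist z p ≤ dist z w

/-! With `c = (l, l + r)` and `z = (x°, y°)`, the two constraints `x ≥ l` and `y - x ≤ r` of `S`
are active at `c`, and `z - c = α (-1, 0) + β (-1, 1)` with `α = 2l + r - x° - y° ≥ 0` and
`β = y° - l - r ≥ 0` lies in their normal cone. Hence `⟪z - c, w - c⟫ ≤ 0` for every `w ∈ S`,
which is the variational characterisation of `c` as the projection of `z`. -/

open RealInnerProductSpace

theorem norm_sub_le_norm_sub_of_inner_nonpos {E : Type*} [NormedAddCommGroup E]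
    [InnerProductSpace ℝ E] {z p w : E} (h : ⟪z - p, w - p⟫ ≤ 0) : ‖z - p‖ ≤ ‖z - w‖ := by
  have key : ‖z - w‖ ^ 2 = ‖z - p‖ ^ 2 - 2 * ⟪z - p, w - p⟫ + ‖w - p‖ ^ 2 := by
    rw [← norm_sub_sq_real, sub_sub_sub_cancel_right]
  exact (sq_le_sq₀ (norm_nonneg _) (norm_nonneg _)).1 (by nlinarith [sq_nonneg ‖w - p‖])

theorem isProj_of_inner_nonpos {n : ℕ} {C : Set (EuclideanSpace ℝ (Fin n))}
    {z p : EuclideanSpace ℝ (Fin n)} (hp : p ∈ C) (h : ∀ w ∈ C, ⟪z - p, w - p⟫ ≤ 0) :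
    IsProj C z p :=
  ⟨hp, fun w hw => by
    simpa only [dist_eq_norm] using norm_sub_le_norm_sub_of_inner_nonpos (h w hw)⟩

theorem inner_toLp_two_sub (a b c d : ℝ) (w : EuclideanSpace ℝ (Fin 2)) :
    ⟪(WithLp.toLp 2 ![a, b] : EuclideanSpace ℝ (Fin 2)) - WithLp.toLp 2 ![c, d],
      w - WithLp.toLp 2 ![c, d]⟫ = (a - c) * (w 0 - c) + (b - d) * (w 1 - d) := by
  simp [EuclideanSpace.inner_eq_star_dotProduct, dotProduct, Fin.sum_univ_two]
  ring

theorem corner_inner_nonpos {l r x0 y0 u v : ℝ} (hy : l + r ≤ y0) (hxy : x0 + y0 ≤ 2 * l + r)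
    (hu : l ≤ u) (hvu : v - u ≤ r) :
    (x0 - l) * (u - l) + (y0 - (l + r)) * (v - (l + r)) ≤ 0 := by
  nlinarith [mul_nonneg (sub_nonneg.2 hxy) (sub_nonneg.2 hu),
    mul_nonneg (sub_nonneg.2 hy) (sub_nonneg.2 hvu)]

theorem projection_corner_c1_general
    (a r l m : ℝ) (hr : 0 < r)
    (hla : -a ≤ l) (hlm : l ≤ m) (hcorner : l + r ≤ a)
    (S : Set (EuclideanSpace ℝ (Fin 2)))
    (hS : S = {p | l ≤ p 0 ∧ p 0 ≤ m ∧ |p 1| ≤ a ∧ |p 1 - p 0| ≤ r})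
    (x0 y0 : ℝ) (hy : l + r ≤ y0) (hxy : x0 + y0 ≤ 2 * l + r) :
    IsProj S (WithLp.toLp 2 ![x0, y0] : EuclideanSpace ℝ (Fin 2))
      (WithLp.toLp 2 ![l, l + r] : EuclideanSpace ℝ (Fin 2)) := by
  subst hS
  have hcorner_mem : l ≤ l ∧ l ≤ m ∧ |l + r| ≤ a ∧ |l + r - l| ≤ r :=
    ⟨le_rfl, hlm, abs_le.2 ⟨by linarith, hcorner⟩, by rw [add_sub_cancel_left, abs_of_pos hr]⟩
  refine isProj_of_inner_nonpos (by simpa using hcorner_mem) fun w ⟨hw0, _, _, hw⟩ => ?_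
  rw [inner_toLp_two_sub]
  exact corner_inner_nonpos hy hxy hw0 (abs_le.1 hw).2

/-- corner-region case `C₁` of the two-dimensional projection onto
`S = {(x,y) : l ≤ x ≤ m, |y| ≤ a, |y − x| ≤ r}`: if `l + r ≤ a` and `(x°,y°)` satisfies
`y° ≥ l + r` and `x° + y° ≤ 2l + r`, then its Euclidean projection onto `S` is the
corner point `(l, l + r)`. -/
theorem projection_corner_c1
    (a r l m : ℝ) (ha : 0 < a) (hr : 0 < r)
    (hla : -a ≤ l) (hlm : l ≤ m) (hma : m ≤ a) (hcorner : l + r ≤ a)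
    (S : Set (EuclideanSpace ℝ (Fin 2)))
    (hS : S = {p | l ≤ p 0 ∧ p 0 ≤ m ∧ |p 1| ≤ a ∧ |p 1 - p 0| ≤ r})
    (x0 y0 : ℝ) (hy : l + r ≤ y0) (hxy : x0 + y0 ≤ 2 * l + r) :
    IsProj S (WithLp.toLp 2 ![x0, y0] : EuclideanSpace ℝ (Fin 2))
      (WithLp.toLp 2 ![l, l + r] : EuclideanSpace ℝ (Fin 2)) :=
  projection_corner_c1_general a r l m hr hla hlm hcorner S hS x0 y0 hy hxy
end

section
/- For real numbers a > 0, r > 0 and bounds l, m with −a ≤ l ≤ m ≤ a, define S = {(x,y) ∈ ℝ² : l ≤ x ≤ m, |y| ≤ a, |y − x| ≤ r}. Suppose m − r ≥ −a. If (x°, y°) ∈ ℝ² satisfies y° ≤ m − r and x° + y° ≥ 2m − r, then the Euclidean projection of (x°, y°) onto S equals the corner point (m, m − r). -/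
theorem isProj_of_inner_le_zero {n : ℕ} {C : Set (EuclideanSpace ℝ (Fin n))}
    {z p : EuclideanSpace ℝ (Fin n)} (hp : p ∈ C)
    (h : ∀ w ∈ C, inner ℝ (z - p) (w - p) ≤ 0) : IsProj C z p := by
  refine ⟨hp, fun w hw => le_of_pow_le_pow_left₀ two_ne_zero dist_nonneg ?_⟩
  have hsq : dist z w ^ 2 = dist z p ^ 2 - 2 * inner ℝ (z - p) (w - p) + dist w p ^ 2 := by
    rw [dist_eq_norm, dist_eq_norm, dist_eq_norm, ← norm_sub_sq_real]
    congr 2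
    abel
  rw [hsq]
  linarith [h w hw, sq_nonneg (dist w p)]

theorem mul_add_mul_nonpos_of_wedge {dx dy u v : ℝ} (hdy : dy ≤ 0) (hsum : 0 ≤ dx + dy)
    (hu : u ≤ 0) (huv : u ≤ v) : dx * u + dy * v ≤ 0 := by
  rw [show dx * u + dy * v = (dx + dy) * u + dy * (v - u) by ring]
  exact add_nonpos (mul_nonpos_of_nonneg_of_nonpos hsum hu)
    (mul_nonpos_of_nonpos_of_nonneg hdy (sub_nonneg.mpr huv))

theorem inner_sub_corner_nonpos {m r x0 y0 : ℝ} (hy : y0 ≤ m - r) (hxy : 2 * m - r ≤ x0 + y0)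
    {w : EuclideanSpace ℝ (Fin 2)} (hw₀ : w 0 ≤ m) (hw : w 0 - w 1 ≤ r) :
    inner ℝ (!₂[x0, y0] - !₂[m, m - r]) (w - !₂[m, m - r]) ≤ 0 := by
  have hinner : inner ℝ (!₂[x0, y0] - !₂[m, m - r]) (w - !₂[m, m - r])
      = (x0 - m) * (w 0 - m) + (y0 - (m - r)) * (w 1 - (m - r)) := by
    simp [PiLp.inner_apply, Fin.sum_univ_two, mul_comm]
  rw [hinner]
  exact mul_add_mul_nonpos_of_wedge (by linarith) (by linarith) (by linarith) (by linarith)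

theorem projection_corner_c3_general
    (a r l m : ℝ) (hr : 0 < r)
    (hlm : l ≤ m) (hma : m ≤ a) (hcorner : -a ≤ m - r)
    (S : Set (EuclideanSpace ℝ (Fin 2)))
    (hS : S = {p | l ≤ p 0 ∧ p 0 ≤ m ∧ |p 1| ≤ a ∧ |p 1 - p 0| ≤ r})
    (x0 y0 : ℝ) (hy : y0 ≤ m - r) (hxy : 2 * m - r ≤ x0 + y0) :
    IsProj S (!₂[x0, y0] : EuclideanSpace ℝ (Fin 2))
      (!₂[m, m - r] : EuclideanSpace ℝ (Fin 2)) := by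
  subst hS
  have hcorner_mem : l ≤ m ∧ m ≤ m ∧ |m - r| ≤ a ∧ |m - r - m| ≤ r :=
    ⟨hlm, le_rfl, abs_le.mpr ⟨hcorner, by linarith⟩,
      by rw [sub_sub_cancel_left, abs_neg, abs_of_pos hr]⟩
  refine isProj_of_inner_le_zero (by simpa using hcorner_mem) fun w ⟨_, hw₀, _, hw⟩ => ?_
  exact inner_sub_corner_nonpos hy hxy hw₀ (by linarith [neg_abs_le (w 1 - w 0)])

/-- corner-region case `C₃` of the two-dimensional projection onto
`S = {(x,y) : l ≤ x ≤ m, |y| ≤ a, |y − x| ≤ r}`: if `m − r ≥ −a` and `(x°,y°)` satisfies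
`y° ≤ m − r` and `x° + y° ≥ 2m − r`, then its Euclidean projection onto `S` is the
corner point `(m, m − r)`. -/
theorem projection_corner_c3
    (a r l m : ℝ) (ha : 0 < a) (hr : 0 < r)
    (hla : -a ≤ l) (hlm : l ≤ m) (hma : m ≤ a) (hcorner : -a ≤ m - r)
    (S : Set (EuclideanSpace ℝ (Fin 2)))
    (hS : S = {p | l ≤ p 0 ∧ p 0 ≤ m ∧ |p 1| ≤ a ∧ |p 1 - p 0| ≤ r})
    (x0 y0 : ℝ) (hy : y0 ≤ m - r) (hxy : 2 * m - r ≤ x0 + y0) :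
    IsProj S (!₂[x0, y0] : EuclideanSpace ℝ (Fin 2))
      (!₂[m, m - r] : EuclideanSpace ℝ (Fin 2)) :=
  projection_corner_c3_general a r l m hr hlm hma hcorner S hS x0 y0 hy hxy
end

section
/- Let C₁ and C₂ be nonempty closed convex subsets of ℝⁿ with C₁ ∩ C₂ ≠ ∅, and let v° ∈ ℝⁿ. Define Dykstra's iterates by x_0 = v°, μ_0 = 0, γ_0 = 0, and for i ≥ 0: y_i = P_{C₁}(x_i + μ_i), μ_{i+1} = μ_i + x_i − y_i, x_{i+1} = P_{C₂}(y_i + γ_i), γ_{i+1} = γ_i + y_i − x_{i+1}. Then both sequences (x_i) and (y_i) converge to P_{C₁∩C₂}(v°), the Euclidean projection of v° onto C₁ ∩ C₂. -/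
/-!
Each projection step of Dykstra's algorithm lowers the Lyapunov function `dykstraEnergy` by at
least the squared length of the step, by the variational inequality of that projection, and the
two inner products in the energy are nonnegative because `p` lies in both sets. Hence
`∑ ‖x m - y m‖² < ∞`, the energy decreases to some `L ≥ 0`, and `‖μ m‖² ≤ m ‖v₀ - p‖²` since `μ m`
is the sum of the first `m` increments `x i - y i`. Along a subsequence on which
`m ‖x m - y m‖² → 0` and `y` converges to some `z`, necessarily in `C₁ ∩ C₂`, the energy tends to
`2 ⟪v₀ - p, z - p⟫ - ‖z - p‖² ≤ 0`. So `L = 0`, which forces `y m → p`, and then `x m → p`.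
-/

open Filter Topology Finset RealInnerProductSpace

theorem Summable.frequently_abs_natCast_mul_lt {a : ℕ → ℝ} (ha : Summable a) {ε : ℝ}
    (hε : 0 < ε) : ∃ᶠ n : ℕ in atTop, |(n : ℝ) * a n| < ε := by
  by_contra hfreq
  rw [not_frequently] at hfreq
  refine Real.not_summable_one_div_natCast <|
    (ha.abs.div_const ε).of_norm_bounded_eventually_nat (hfreq.mono fun n hn => ?_)
  rw [not_lt, abs_mul, Nat.abs_cast] at hn
  rw [Real.norm_eq_abs, abs_of_nonneg (by positivity), le_div_iff₀ hε]
  rcases n.eq_zero_or_pos with rfl | hn0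
  · simp
  · rw [div_mul_eq_mul_div, div_le_iff₀ (by positivity)]
    linarith

theorem Summable.exists_strictMono_tendsto_natCast_mul {a : ℕ → ℝ} (ha : Summable a) :
    ∃ φ : ℕ → ℕ, StrictMono φ ∧ Tendsto (fun k => (φ k : ℝ) * a (φ k)) atTop (𝓝 0) := by
  obtain ⟨φ, hφ, hsmall⟩ := extraction_forall_of_frequently
    (P := fun k n => |(n : ℝ) * a n| < 1 / ((k : ℝ) + 1))
    fun k => ha.frequently_abs_natCast_mul_lt Nat.one_div_pos_of_nat
  exact ⟨φ, hφ, squeeze_zero_norm (fun k => (hsmall k).le) tendsto_one_div_add_atTop_nhds_zero_nat⟩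

theorem tendsto_zero_of_tendsto_sq {α : Type*} {l : Filter α} {g : α → ℝ}
    (h : Tendsto (fun i => g i ^ 2) l (𝓝 0)) : Tendsto g l (𝓝 0) := by
  have habs := h.sqrt
  simp only [Real.sqrt_sq_eq_abs, Real.sqrt_zero] at habs
  exact (tendsto_zero_iff_abs_tendsto_zero g).2 habs

variable {E : Type*} [NormedAddCommGroup E] [InnerProductSpace ℝ E]

theorem tendsto_inner_zero_of_sq_norm_le {α : Type*} {l : Filter α} {u v : α → E} {c : α → ℝ}
    {K : ℝ} (hu : ∀ i, ‖u i‖ ^ 2 ≤ c i * K) (hv : Tendsto (fun i => c i * ‖v i‖ ^ 2) l (𝓝 0)) :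
    Tendsto (fun i => ⟪u i, v i⟫) l (𝓝 0) := by
  refine tendsto_zero_of_tendsto_sq <| squeeze_zero (fun i => sq_nonneg _) (fun i => ?_)
    (by simpa using hv.mul_const K)
  calc ⟪u i, v i⟫ ^ 2 ≤ ‖u i‖ ^ 2 * ‖v i‖ ^ 2 := by
        rw [← mul_pow, ← sq_abs]
        exact pow_le_pow_left₀ (abs_nonneg _) (abs_real_inner_le_norm _ _) 2
    _ ≤ c i * K * ‖v i‖ ^ 2 := mul_le_mul_of_nonneg_right (hu i) (sq_nonneg _)
    _ = c i * ‖v i‖ ^ 2 * K := by ring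

/-- One projection step: from the point `u` with dual variable `ν`, previously paired with `q`,
to `w = P (u + ν)` with dual variable `ν + u - w`. -/
theorem norm_sub_sq_add_le_of_inner_nonpos {u w ν q p : E} (h : ⟪ν, w - q⟫ ≤ 0) :
    ‖w - p‖ ^ 2 + 2 * ⟪ν + u - w, w - p⟫ + ‖u - w‖ ^ 2 ≤ ‖u - p‖ ^ 2 + 2 * ⟪ν, q - p⟫ := by
  have hu : u - p = (u - w) + (w - p) := by abel
  have hz : ν + u - w = (u - w) + ν := by abel
  have hν : ⟪ν, w - p⟫ = ⟪ν, w - q⟫ + ⟪ν, q - p⟫ := by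
    rw [← inner_add_right]; congr 1; abel
  rw [hu, hz, norm_add_sq_real, inner_add_left, hν]
  linarith

/-- Dykstra's iteration for two convex sets, with each projection described by its
variational inequality. -/
structure IsDykstraSeq (C₁ C₂ : Set E) (v₀ : E) (x y μ γ : ℕ → E) : Prop where
  x_zero : x 0 = v₀
  μ_zero : μ 0 = 0
  γ_zero : γ 0 = 0
  μ_succ : ∀ i, μ (i + 1) = μ i + x i - y i
  γ_succ : ∀ i, γ (i + 1) = γ i + y i - x (i + 1)
  y_mem : ∀ i, y i ∈ C₁
  inner_y_nonpos : ∀ i, ∀ c ∈ C₁, ⟪x i + μ i - y i, c - y i⟫ ≤ 0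
  x_succ_mem : ∀ i, x (i + 1) ∈ C₂
  inner_x_succ_nonpos : ∀ i, ∀ c ∈ C₂, ⟪y i + γ i - x (i + 1), c - x (i + 1)⟫ ≤ 0

/-- The Lyapunov function of Dykstra's iteration, evaluated after the `m`-th projection onto
`C₁`: each dual variable is paired with the point produced together with it. -/
def dykstraEnergy (p : E) (x y μ γ : ℕ → E) (m : ℕ) : ℝ :=
  ‖y m - p‖ ^ 2 + 2 * ⟪μ (m + 1), y m - p⟫ + 2 * ⟪γ m, x m - p⟫

namespace IsDykstraSeq

variable {C₁ C₂ : Set E} {v₀ p : E} {x y μ γ : ℕ → E}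

theorem inner_μ_succ_nonpos (h : IsDykstraSeq C₁ C₂ v₀ x y μ γ) (i : ℕ) {c : E} (hc : c ∈ C₁) :
    ⟪μ (i + 1), c - y i⟫ ≤ 0 := by
  rw [h.μ_succ, add_comm (μ i)]
  exact h.inner_y_nonpos i c hc

theorem inner_γ_nonpos (h : IsDykstraSeq C₁ C₂ v₀ x y μ γ) (i : ℕ) {c : E} (hc : c ∈ C₂) :
    ⟪γ i, c - x i⟫ ≤ 0 := by
  cases i with
  | zero => simp [h.γ_zero]
  | succ i =>
    rw [h.γ_succ, add_comm (γ i)]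
    exact h.inner_x_succ_nonpos i c hc

theorem x_mem (h : IsDykstraSeq C₁ C₂ v₀ x y μ γ) {m : ℕ} (hm : m ≠ 0) : x m ∈ C₂ := by
  obtain ⟨k, rfl⟩ := Nat.exists_eq_succ_of_ne_zero hm
  exact h.x_succ_mem k

theorem μ_add_γ (h : IsDykstraSeq C₁ C₂ v₀ x y μ γ) (m : ℕ) : μ m + γ m = v₀ - x m := by
  induction m with
  | zero => simp [h.μ_zero, h.γ_zero, h.x_zero]
  | succ m ih =>
    rw [eq_sub_iff_add_eq] at ih
    rw [h.μ_succ, h.γ_succ, ← ih]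
    abel

theorem μ_eq_sum (h : IsDykstraSeq C₁ C₂ v₀ x y μ γ) (m : ℕ) :
    μ m = ∑ i ∈ range m, (x i - y i) := by
  induction m with
  | zero => simp [h.μ_zero]
  | succ m ih => rw [sum_range_succ, ← ih, h.μ_succ, add_sub_assoc]

theorem energy_succ_add_le (h : IsDykstraSeq C₁ C₂ v₀ x y μ γ) (m : ℕ) :
    dykstraEnergy p x y μ γ (m + 1) + ‖x (m + 1) - y (m + 1)‖ ^ 2 ≤ dykstraEnergy p x y μ γ m := by
  have step_C₂ := norm_sub_sq_add_le_of_inner_nonpos (u := y m) (p := p)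
    (h.inner_γ_nonpos m (h.x_succ_mem m))
  have step_C₁ := norm_sub_sq_add_le_of_inner_nonpos (u := x (m + 1)) (p := p)
    (h.inner_μ_succ_nonpos m (h.y_mem (m + 1)))
  rw [← h.γ_succ] at step_C₂
  rw [← h.μ_succ] at step_C₁
  unfold dykstraEnergy
  linarith [sq_nonneg ‖y m - x (m + 1)‖]

theorem energy_zero_add_le (h : IsDykstraSeq C₁ C₂ v₀ x y μ γ) :
    dykstraEnergy p x y μ γ 0 + ‖x 0 - y 0‖ ^ 2 ≤ ‖v₀ - p‖ ^ 2 := by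
  have step := norm_sub_sq_add_le_of_inner_nonpos (u := x 0) (w := y 0) (q := y 0) (p := p)
    (ν := μ 0) (by simp [h.μ_zero])
  rw [← h.μ_succ, h.μ_zero, inner_zero_left, h.x_zero] at step
  simpa [dykstraEnergy, h.γ_zero, h.x_zero] using step

theorem energy_add_sum_le (h : IsDykstraSeq C₁ C₂ v₀ x y μ γ) (m : ℕ) :
    dykstraEnergy p x y μ γ m + ∑ i ∈ range (m + 1), ‖x i - y i‖ ^ 2 ≤ ‖v₀ - p‖ ^ 2 := by
  induction m with
  | zero => simpa using h.energy_zero_add_le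
  | succ m ih =>
    rw [sum_range_succ]
    linarith [h.energy_succ_add_le (p := p) m]

theorem sq_norm_y_sub_le_energy (h : IsDykstraSeq C₁ C₂ v₀ x y μ γ) (hp : p ∈ C₁ ∩ C₂)
    (m : ℕ) : ‖y m - p‖ ^ 2 ≤ dykstraEnergy p x y μ γ m := by
  have hμ : 0 ≤ ⟪μ (m + 1), y m - p⟫ := by
    rw [← neg_sub, inner_neg_right, neg_nonneg]; exact h.inner_μ_succ_nonpos m hp.1
  have hγ : 0 ≤ ⟪γ m, x m - p⟫ := by
    rw [← neg_sub, inner_neg_right, neg_nonneg]; exact h.inner_γ_nonpos m hp.2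
  unfold dykstraEnergy
  linarith

theorem energy_nonneg (h : IsDykstraSeq C₁ C₂ v₀ x y μ γ) (hp : p ∈ C₁ ∩ C₂) (m : ℕ) :
    0 ≤ dykstraEnergy p x y μ γ m :=
  (sq_nonneg _).trans (h.sq_norm_y_sub_le_energy hp m)

theorem sum_sq_norm_sub_le (h : IsDykstraSeq C₁ C₂ v₀ x y μ γ) (hp : p ∈ C₁ ∩ C₂) (m : ℕ) :
    ∑ i ∈ range m, ‖x i - y i‖ ^ 2 ≤ ‖v₀ - p‖ ^ 2 := by
  have hsucc := sum_range_succ (fun i => ‖x i - y i‖ ^ 2) m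
  linarith [h.energy_add_sum_le (p := p) m, h.energy_nonneg hp m, sq_nonneg ‖x m - y m‖]

theorem sq_norm_y_sub_le (h : IsDykstraSeq C₁ C₂ v₀ x y μ γ) (hp : p ∈ C₁ ∩ C₂) (m : ℕ) :
    ‖y m - p‖ ^ 2 ≤ ‖v₀ - p‖ ^ 2 := by
  have hsum : 0 ≤ ∑ i ∈ range (m + 1), ‖x i - y i‖ ^ 2 := sum_nonneg fun i _ => sq_nonneg _
  linarith [h.energy_add_sum_le (p := p) m, h.sq_norm_y_sub_le_energy hp m]

theorem sq_norm_μ_le (h : IsDykstraSeq C₁ C₂ v₀ x y μ γ) (hp : p ∈ C₁ ∩ C₂) (m : ℕ) :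
    ‖μ m‖ ^ 2 ≤ m * ‖v₀ - p‖ ^ 2 :=
  calc ‖μ m‖ ^ 2 ≤ (∑ i ∈ range m, ‖x i - y i‖) ^ 2 := by
        rw [h.μ_eq_sum]
        exact pow_le_pow_left₀ (norm_nonneg _) (norm_sum_le _ _) 2
    _ ≤ m * ∑ i ∈ range m, ‖x i - y i‖ ^ 2 := by
        simpa using sq_sum_le_card_mul_sum_sq (s := range m) (f := fun i => ‖x i - y i‖)
    _ ≤ m * ‖v₀ - p‖ ^ 2 := by gcongr; exact h.sum_sq_norm_sub_le hp m

theorem summable_sq_norm_sub (h : IsDykstraSeq C₁ C₂ v₀ x y μ γ) (hp : p ∈ C₁ ∩ C₂) :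
    Summable fun i => ‖x i - y i‖ ^ 2 :=
  summable_of_sum_range_le (fun _ => sq_nonneg _) (h.sum_sq_norm_sub_le hp)

theorem tendsto_sub (h : IsDykstraSeq C₁ C₂ v₀ x y μ γ) (hp : p ∈ C₁ ∩ C₂) :
    Tendsto (fun i => x i - y i) atTop (𝓝 0) :=
  tendsto_zero_iff_norm_tendsto_zero.2 <|
    tendsto_zero_of_tendsto_sq (h.summable_sq_norm_sub hp).tendsto_atTop_zero

theorem exists_tendsto_energy (h : IsDykstraSeq C₁ C₂ v₀ x y μ γ) (hp : p ∈ C₁ ∩ C₂) :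
    ∃ L, Tendsto (dykstraEnergy p x y μ γ) atTop (𝓝 L) :=
  ⟨_, tendsto_atTop_ciInf
    (antitone_nat_of_succ_le fun m => by
      linarith [h.energy_succ_add_le (p := p) m, sq_nonneg ‖x (m + 1) - y (m + 1)‖])
    ⟨0, Set.forall_mem_range.2 (h.energy_nonneg hp)⟩⟩

theorem energy_eq (h : IsDykstraSeq C₁ C₂ v₀ x y μ γ) (m : ℕ) :
    dykstraEnergy p x y μ γ m = ‖y m - p‖ ^ 2 + 2 * ⟪x m - y m, y m - p⟫
      - 2 * ⟪μ m, x m - y m⟫ + 2 * ⟪v₀ - x m, x m - p⟫ := by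
  have hγ : γ m = v₀ - x m - μ m := by rw [← h.μ_add_γ]; abel
  simp only [dykstraEnergy, h.μ_succ, hγ, inner_add_left, inner_sub_left, inner_sub_right]
  ring

theorem exists_subseq_tendsto_energy [ProperSpace E] (h : IsDykstraSeq C₁ C₂ v₀ x y μ γ)
    (hC₁ : IsClosed C₁) (hC₂ : IsClosed C₂) (hp : p ∈ C₁ ∩ C₂) :
    ∃ z ∈ C₁ ∩ C₂, ∃ χ : ℕ → ℕ, StrictMono χ ∧
      Tendsto (dykstraEnergy p x y μ γ ∘ χ) atTop (𝓝 (‖z - p‖ ^ 2 + 2 * ⟪v₀ - z, z - p⟫)) := by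
  obtain ⟨φ, hφ, hφ_small⟩ := (h.summable_sq_norm_sub hp).exists_strictMono_tendsto_natCast_mul
  have hbdd : ∀ k, y (φ k) ∈ Metric.closedBall p ‖v₀ - p‖ := fun k => by
    rw [Metric.mem_closedBall, dist_eq_norm]
    exact (pow_le_pow_iff_left₀ (norm_nonneg _) (norm_nonneg _) two_ne_zero).1
      (h.sq_norm_y_sub_le hp _)
  obtain ⟨z, -, ψ, hψ, hyz⟩ := tendsto_subseq_of_bounded Metric.isBounded_closedBall hbdd
  set χ := φ ∘ ψ
  have hχ : Tendsto χ atTop atTop := (hφ.comp hψ).tendsto_atTop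
  have hsub : Tendsto (fun k => x (χ k) - y (χ k)) atTop (𝓝 0) := (h.tendsto_sub hp).comp hχ
  have hxz : Tendsto (x ∘ χ) atTop (𝓝 z) := by
    have hsum := hsub.add hyz
    rw [zero_add] at hsum
    exact hsum.congr fun k => sub_add_cancel _ _
  -- `‖μ m‖ ‖x m - y m‖ ≤ ‖v₀ - p‖ √(m ‖x m - y m‖²)`, which vanishes along `φ`.
  have hμ : Tendsto (fun k => ⟪μ (χ k), x (χ k) - y (χ k)⟫) atTop (𝓝 0) :=
    tendsto_inner_zero_of_sq_norm_le (fun k => h.sq_norm_μ_le hp (χ k))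
      (hφ_small.comp hψ.tendsto_atTop)
  have hz : z ∈ C₁ ∩ C₂ :=
    ⟨hC₁.mem_of_tendsto hyz (.of_forall fun k => h.y_mem _),
      hC₂.mem_of_tendsto hxz ((hχ.eventually_ne_atTop 0).mono fun k => h.x_mem)⟩
  refine ⟨z, hz, χ, hφ.comp hψ, ?_⟩
  have hlim := ((hyz.sub_const p).norm.pow 2).add ((hsub.inner (hyz.sub_const p)).const_mul 2)
    |>.sub (hμ.const_mul 2) |>.add (((hxz.const_sub v₀).inner (hxz.sub_const p)).const_mul 2)
  simp only [inner_zero_left, mul_zero, add_zero, sub_zero] at hlim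
  exact hlim.congr fun k => (h.energy_eq (χ k)).symm

theorem tendsto [ProperSpace E] (h : IsDykstraSeq C₁ C₂ v₀ x y μ γ) (hC₁ : IsClosed C₁)
    (hC₂ : IsClosed C₂) (hp : p ∈ C₁ ∩ C₂) (hv₀ : ∀ c ∈ C₁ ∩ C₂, ⟪v₀ - p, c - p⟫ ≤ 0) :
    Tendsto x atTop (𝓝 p) ∧ Tendsto y atTop (𝓝 p) := by
  obtain ⟨L, hL⟩ := h.exists_tendsto_energy hp
  obtain ⟨z, hz, χ, hχ, hχL⟩ := h.exists_subseq_tendsto_energy hC₁ hC₂ hp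
  have hL_eq : L = 2 * ⟪v₀ - p, z - p⟫ - ‖z - p‖ ^ 2 := by
    rw [tendsto_nhds_unique (hL.comp hχ.tendsto_atTop) hχL, ← sub_sub_sub_cancel_right v₀ z p,
      inner_sub_left, real_inner_self_eq_norm_sq]
    ring
  have hL_zero : L = 0 :=
    le_antisymm (by linarith [hv₀ z hz, sq_nonneg ‖z - p‖])
      (ge_of_tendsto' hL (h.energy_nonneg hp))
  have hy : Tendsto y atTop (𝓝 p) :=
    tendsto_iff_norm_sub_tendsto_zero.2 <| tendsto_zero_of_tendsto_sq <|
      squeeze_zero (fun _ => sq_nonneg _) (h.sq_norm_y_sub_le_energy hp) (hL_zero ▸ hL)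
  have hx := (h.tendsto_sub hp).add hy
  rw [zero_add] at hx
  exact ⟨hx.congr fun m => sub_add_cancel _ _, hy⟩

end IsDykstraSeq

theorem IsProj.inner_sub_nonpos {n : ℕ} {C : Set (EuclideanSpace ℝ (Fin n))}
    {z p : EuclideanSpace ℝ (Fin n)} (hC : Convex ℝ C) (h : IsProj C z p) :
    ∀ c ∈ C, ⟪z - p, c - p⟫ ≤ 0 := by
  have : Nonempty C := ⟨⟨p, h.1⟩⟩
  refine (norm_eq_iInf_iff_real_inner_le_zero hC h.1).1 (le_antisymm ?_ ?_)
  · exact le_ciInf fun w : C => by simpa only [dist_eq_norm] using h.2 w w.2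
  · exact ciInf_le ⟨0, Set.forall_mem_range.2 fun w : C => norm_nonneg (z - w)⟩ (⟨p, h.1⟩ : C)

theorem dykstra_converges_general
    (n : ℕ) (C₁ C₂ : Set (EuclideanSpace ℝ (Fin n)))
    (hC₁cl : IsClosed C₁) (hC₁conv : Convex ℝ C₁)
    (hC₂cl : IsClosed C₂) (hC₂conv : Convex ℝ C₂)
    (P₁ P₂ : EuclideanSpace ℝ (Fin n) → EuclideanSpace ℝ (Fin n))
    (hP₁ : ∀ z, IsProj C₁ z (P₁ z)) (hP₂ : ∀ z, IsProj C₂ z (P₂ z))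
    (v0 : EuclideanSpace ℝ (Fin n))
    (x y μ γ : ℕ → EuclideanSpace ℝ (Fin n))
    (hx0 : x 0 = v0) (hμ0 : μ 0 = 0) (hγ0 : γ 0 = 0)
    (hy : ∀ i, y i = P₁ (x i + μ i))
    (hμ : ∀ i, μ (i + 1) = μ i + x i - y i)
    (hx : ∀ i, x (i + 1) = P₂ (y i + γ i))
    (hγ : ∀ i, γ (i + 1) = γ i + y i - x (i + 1))
    (pStar : EuclideanSpace ℝ (Fin n)) (hpStar : IsProj (C₁ ∩ C₂) v0 pStar) :
    Tendsto x atTop (𝓝 pStar) ∧ Tendsto y atTop (𝓝 pStar) := by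
  have hdykstra : IsDykstraSeq C₁ C₂ v0 x y μ γ :=
    { x_zero := hx0
      μ_zero := hμ0
      γ_zero := hγ0
      μ_succ := hμ
      γ_succ := hγ
      y_mem := fun i => hy i ▸ (hP₁ _).1
      inner_y_nonpos := fun i => hy i ▸ (hP₁ _).inner_sub_nonpos hC₁conv
      x_succ_mem := fun i => hx i ▸ (hP₂ _).1
      inner_x_succ_nonpos := fun i => hx i ▸ (hP₂ _).inner_sub_nonpos hC₂conv }
  exact hdykstra.tendsto hC₁cl hC₂cl hpStar.1 (hpStar.inner_sub_nonpos (hC₁conv.inter hC₂conv))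

/-- Dykstra's alternating projection algorithm for two nonempty closed
convex sets `C₁, C₂ ⊆ ℝⁿ` with nonempty intersection: both iterate sequences `(x_i)`
and `(y_i)` converge to the Euclidean projection of `v°` onto `C₁ ∩ C₂`. -/
theorem dykstra_converges
    (n : ℕ) (C₁ C₂ : Set (EuclideanSpace ℝ (Fin n)))
    (hC₁ne : C₁.Nonempty) (hC₁cl : IsClosed C₁) (hC₁conv : Convex ℝ C₁)
    (hC₂ne : C₂.Nonempty) (hC₂cl : IsClosed C₂) (hC₂conv : Convex ℝ C₂)
    (hinter : (C₁ ∩ C₂).Nonempty)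
    (P₁ P₂ : EuclideanSpace ℝ (Fin n) → EuclideanSpace ℝ (Fin n))
    (hP₁ : ∀ z, IsProj C₁ z (P₁ z)) (hP₂ : ∀ z, IsProj C₂ z (P₂ z))
    (v0 : EuclideanSpace ℝ (Fin n))
    (x y μ γ : ℕ → EuclideanSpace ℝ (Fin n))
    (hx0 : x 0 = v0) (hμ0 : μ 0 = 0) (hγ0 : γ 0 = 0)
    (hy : ∀ i, y i = P₁ (x i + μ i))
    (hμ : ∀ i, μ (i + 1) = μ i + x i - y i)
    (hx : ∀ i, x (i + 1) = P₂ (y i + γ i))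
    (hγ : ∀ i, γ (i + 1) = γ i + y i - x (i + 1))
    (pStar : EuclideanSpace ℝ (Fin n)) (hpStar : IsProj (C₁ ∩ C₂) v0 pStar) :
    Tendsto x atTop (𝓝 pStar) ∧ Tendsto y atTop (𝓝 pStar) :=
  dykstra_converges_general n C₁ C₂ hC₁cl hC₁conv hC₂cl hC₂conv P₁ P₂ hP₁ hP₂ v0 x y μ γ hx0 hμ0 hγ0
    hy hμ hx hγ pStar hpStar
end

section
/- Let C and D be nonempty closed convex subsets of ℝⁿ with C ∩ D ≠ ∅, and let x_0 ∈ ℝⁿ. Define the alternating projection iterates x_{2i+1} = P_C(x_{2i}) and x_{2i+2} = P_D(x_{2i+1}) for i ≥ 0. Then the sequence (x_i) converges to some point belonging to C ∩ D. -/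
open Filter Topology

theorem IsProj.dist_sq_add_dist_sq_le {n : ℕ} {C : Set (EuclideanSpace ℝ (Fin n))}
    (hC : Convex ℝ C) {z p q : EuclideanSpace ℝ (Fin n)} (hp : IsProj C z p) (hq : q ∈ C) :
    dist p q ^ 2 + dist z p ^ 2 ≤ dist z q ^ 2 := by
  have : Nonempty C := ⟨⟨p, hp.1⟩⟩
  have hinf : ‖z - p‖ = ⨅ w : C, ‖z - w‖ := by
    refine le_antisymm (le_ciInf fun w => ?_) (ciInf_le ⟨0, ?_⟩ (⟨p, hp.1⟩ : C))
    · simpa only [dist_eq_norm] using hp.2 w w.2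
    · rintro _ ⟨w, rfl⟩
      exact norm_nonneg _
  have hobtuse : inner ℝ (z - p) (q - p) ≤ 0 :=
    (norm_eq_iInf_iff_real_inner_le_zero hC hp.1).1 hinf q hq
  have hexpand : ‖z - q‖ ^ 2 = ‖z - p‖ ^ 2 - 2 * inner ℝ (z - p) (q - p) + ‖q - p‖ ^ 2 := by
    rw [← norm_sub_sq_real, sub_sub_sub_cancel_right]
  rw [dist_eq_norm, dist_eq_norm, dist_eq_norm, hexpand, norm_sub_rev p q]
  linarith

section Fejer

variable {α : Type*} [PseudoMetricSpace α] {x : ℕ → α}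

theorem antitone_dist_of_dist_sq_add_dist_sq_le {q : α}
    (h : ∀ i, dist (x (i + 1)) q ^ 2 + dist (x i) (x (i + 1)) ^ 2 ≤ dist (x i) q ^ 2) :
    Antitone fun i => dist (x i) q :=
  antitone_nat_of_succ_le fun i =>
    (pow_le_pow_iff_left₀ dist_nonneg dist_nonneg two_ne_zero).1 <|
      le_of_add_le_of_nonneg_left (h i) (sq_nonneg _)

theorem tendsto_dist_succ_of_dist_sq_add_dist_sq_le {q : α}
    (h : ∀ i, dist (x (i + 1)) q ^ 2 + dist (x i) (x (i + 1)) ^ 2 ≤ dist (x i) q ^ 2) :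
    Tendsto (fun i => dist (x i) (x (i + 1))) atTop (𝓝 0) := by
  have htelescope : ∀ N, ∑ i ∈ Finset.range N, dist (x i) (x (i + 1)) ^ 2 + dist (x N) q ^ 2
      ≤ dist (x 0) q ^ 2 := by
    intro N
    induction N with
    | zero => simp
    | succ N ih =>
      rw [Finset.sum_range_succ]
      linarith [h N]
  have hsummable : Summable fun i => dist (x i) (x (i + 1)) ^ 2 :=
    summable_of_sum_range_le (fun _ => sq_nonneg _) fun N =>
      le_of_add_le_of_nonneg_left (htelescope N) (sq_nonneg _)
  simpa [Real.sqrt_sq dist_nonneg] using hsummable.tendsto_atTop_zero.sqrt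

theorem mem_of_mapClusterPt_of_tendsto_dist_succ {C : Set α} {p : α} (hC : IsClosed C)
    (hstep : Tendsto (fun i => dist (x i) (x (i + 1))) atTop (𝓝 0))
    (hmem : ∀ᶠ i in atTop, x i ∈ C ∨ x (i + 1) ∈ C) (hp : MapClusterPt p atTop x) : p ∈ C := by
  obtain ⟨ψ, hψ, hxψ⟩ := hp.tendsto_subseq
  have hxψ_succ : Tendsto (fun k => x (ψ k + 1)) atTop (𝓝 p) :=
    hxψ.congr_dist (hstep.comp hψ.tendsto_atTop)
  rcases frequently_or_distrib.1 (hψ.tendsto_atTop.eventually hmem).frequently with h | h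
  exacts [hC.mem_of_frequently_of_tendsto h hxψ, hC.mem_of_frequently_of_tendsto h hxψ_succ]

theorem exists_tendsto_of_antitone_dist_of_mapClusterPt [ProperSpace α] {S : Set α}
    (hS : S.Nonempty) (hfejer : ∀ q ∈ S, Antitone fun i => dist (x i) q)
    (hcluster : ∀ p, MapClusterPt p atTop x → p ∈ S) : ∃ p ∈ S, Tendsto x atTop (𝓝 p) := by
  obtain ⟨q, hq⟩ := hS
  obtain ⟨p, -, hp⟩ := (isCompact_closedBall q (dist (x 0) q)).exists_mapClusterPt
    (u := x) (f := atTop) (tendsto_principal.2 (.of_forall fun i => hfejer q hq (Nat.zero_le i)))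
  have hpS := hcluster p hp
  refine ⟨p, hpS, tendsto_iff_dist_tendsto_zero.2 ?_⟩
  obtain ⟨ψ, hψ, hxψ⟩ := hp.tendsto_subseq
  have hlim := tendsto_atTop_ciInf (hfejer p hpS) ⟨0, by rintro _ ⟨i, rfl⟩; exact dist_nonneg⟩
  have hinf : (⨅ i, dist (x i) p) = 0 :=
    tendsto_nhds_unique (hlim.comp hψ.tendsto_atTop) (tendsto_iff_dist_tendsto_zero.1 hxψ)
  rwa [hinf] at hlim

end Fejer

theorem alternating_projections_converge_general
    (n : ℕ) (C D : Set (EuclideanSpace ℝ (Fin n)))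
    (hCcl : IsClosed C) (hCconv : Convex ℝ C)
    (hDcl : IsClosed D) (hDconv : Convex ℝ D)
    (hinter : (C ∩ D).Nonempty)
    (PC PD : EuclideanSpace ℝ (Fin n) → EuclideanSpace ℝ (Fin n))
    (hPC : ∀ z, IsProj C z (PC z)) (hPD : ∀ z, IsProj D z (PD z))
    (x : ℕ → EuclideanSpace ℝ (Fin n))
    (hodd : ∀ i, x (2 * i + 1) = PC (x (2 * i)))
    (heven : ∀ i, x (2 * i + 2) = PD (x (2 * i + 1))) :
    ∃ p ∈ C ∩ D, Tendsto x atTop (𝓝 p) := by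
  have hproj : ∀ i, IsProj C (x i) (x (i + 1)) ∨ IsProj D (x i) (x (i + 1)) := by
    intro i
    rcases Nat.even_or_odd' i with ⟨j, rfl | rfl⟩
    · exact .inl (hodd j ▸ hPC _)
    · exact .inr (heven j ▸ hPD _)
  have hdecrease : ∀ q ∈ C ∩ D, ∀ i,
      dist (x (i + 1)) q ^ 2 + dist (x i) (x (i + 1)) ^ 2 ≤ dist (x i) q ^ 2 := fun q hq i =>
    (hproj i).elim (·.dist_sq_add_dist_sq_le hCconv hq.1) (·.dist_sq_add_dist_sq_le hDconv hq.2)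
  have hstep := tendsto_dist_succ_of_dist_sq_add_dist_sq_le (hdecrease _ hinter.some_mem)
  have hxC : ∀ i, Odd i → x i ∈ C := by
    rintro _ ⟨j, rfl⟩
    exact hodd j ▸ (hPC _).1
  have hxD : ∀ i, Odd i → x (i + 1) ∈ D := by
    rintro _ ⟨j, rfl⟩
    exact heven j ▸ (hPD _).1
  refine exists_tendsto_of_antitone_dist_of_mapClusterPt hinter
    (fun q hq => antitone_dist_of_dist_sq_add_dist_sq_le (hdecrease q hq)) fun p hp => ⟨?_, ?_⟩
  · refine mem_of_mapClusterPt_of_tendsto_dist_succ hCcl hstep (.of_forall fun i => ?_) hp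
    exact (Nat.even_or_odd i).symm.imp (hxC i) fun h => hxC _ h.add_one
  · refine mem_of_mapClusterPt_of_tendsto_dist_succ hDcl hstep
      (eventually_atTop.2 ⟨1, fun i hi => ?_⟩) hp
    obtain ⟨j, rfl⟩ := Nat.exists_eq_add_of_le' hi
    exact (Nat.even_or_odd j).symm.imp (hxD j) fun h => hxD _ h.add_one

/-- the alternating projections method for two nonempty closed convex sets
`C, D ⊆ ℝⁿ` with nonempty intersection converges to some point of `C ∩ D`. -/
theorem alternating_projections_converge
    (n : ℕ) (C D : Set (EuclideanSpace ℝ (Fin n)))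
    (hCne : C.Nonempty) (hCcl : IsClosed C) (hCconv : Convex ℝ C)
    (hDne : D.Nonempty) (hDcl : IsClosed D) (hDconv : Convex ℝ D)
    (hinter : (C ∩ D).Nonempty)
    (PC PD : EuclideanSpace ℝ (Fin n) → EuclideanSpace ℝ (Fin n))
    (hPC : ∀ z, IsProj C z (PC z)) (hPD : ∀ z, IsProj D z (PD z))
    (x : ℕ → EuclideanSpace ℝ (Fin n))
    (hodd : ∀ i, x (2 * i + 1) = PC (x (2 * i)))
    (heven : ∀ i, x (2 * i + 2) = PD (x (2 * i + 1))) :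
    ∃ p ∈ C ∩ D, Tendsto x atTop (𝓝 p) :=
  alternating_projections_converge_general n C D hCcl hCconv hDcl hDconv hinter PC PD hPC hPD x hodd
    heven
end

section
/- Let U ⊆ ℝⁿ be a nonempty closed convex set, J ∈ ℝⁿˣⁿ a symmetric matrix and q ∈ ℝⁿ, and suppose there are constants 0 < λ_min ≤ λ_max with λ_min‖v‖² ≤ vᵀJv ≤ λ_max‖v‖² for all v ∈ ℝⁿ. Let f(u) = ½uᵀJu + qᵀu and let u* be the unique minimizer of f over U. Set β = (√λ_max − √λ_min)/(√λ_max + √λ_min). Define the fast gradient method iterates by choosing u_1 = y_1 ∈ U and, for i ≥ 1, u_{i+1} = P_U(y_i − (J y_i + q)/λ_max) and y_{i+1} = (1+β)u_{i+1} − β u_i. Then for all i ≥ 1, f(u_i) − f(u*) ≤ (1 − √(λ_min/λ_max))^{i−1} · ( f(u_1) − f(u*) + (λ_min/2)‖u_1 − u*‖² ). -/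
/-!
Nesterov's estimate-sequence argument, with `μ = λ_min`, `L = λ_max` and `θ = √(μ/L)`. For the
auxiliary points `v_{k+1} = u_k + θ⁻¹ (u_{k+1} - u_k)` the momentum rule is equivalent to
`(1 + θ) y_k = θ v_k + u_k`. The gradient-mapping inequality of the projected gradient step from
`y_k`, taken at `u_k` and at `u*` with weights `1 - θ` and `θ`, shows that the potential
`f(u_k) - f(u*) + (μ/2)‖v_k - u*‖²` shrinks by the factor `1 - θ` at every step. For the quadratic
`f` the two-sided bounds this needs come from its exact second-order Taylor expansion.
-/

open Matrix
open scoped RealInnerProductSpace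

section InnerProductSpace

variable {E : Type*} [NormedAddCommGroup E] [InnerProductSpace ℝ E]

theorem real_inner_sub_le_zero_of_forall_dist_le {C : Set E} (hC : Convex ℝ C) {z p : E}
    (hp : p ∈ C) (hmin : ∀ w ∈ C, dist z p ≤ dist z w) : ∀ w ∈ C, ⟪z - p, w - p⟫ ≤ 0 := by
  have : Nonempty C := ⟨⟨p, hp⟩⟩
  refine (norm_eq_iInf_iff_real_inner_le_zero hC hp).1 (le_antisymm ?_ ?_)
  · exact le_ciInf fun w => by simpa [dist_eq_norm] using hmin w w.2
  · exact ciInf_le (f := fun w : C => ‖z - w‖) ⟨0, by rintro _ ⟨w, rfl⟩; positivity⟩ ⟨p, hp⟩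

theorem norm_sq_convex_comb_le {θ : ℝ} (hθ0 : 0 ≤ θ) (hθ1 : θ ≤ 1) (x z : E) :
    ‖(1 - θ) • x + θ • z‖ ^ 2 ≤ (1 - θ) * ‖x‖ ^ 2 + θ * ‖z‖ ^ 2 := by
  have hgap : (1 - θ) * ‖x‖ ^ 2 + θ * ‖z‖ ^ 2 - ‖(1 - θ) • x + θ • z‖ ^ 2
      = θ * (1 - θ) * ‖x - z‖ ^ 2 := by
    rw [norm_add_sq_real, norm_sub_sq_real, norm_smul, norm_smul, real_inner_smul_left,
      real_inner_smul_right, Real.norm_of_nonneg (sub_nonneg.2 hθ1), Real.norm_of_nonneg hθ0]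
    ring
  nlinarith [mul_nonneg (mul_nonneg hθ0 (sub_nonneg.2 hθ1)) (sq_nonneg ‖x - z‖)]

/-- Nesterov's gradient-mapping inequality: `hproj` is the variational characterisation of
`y' = P_U (y - L⁻¹ g)` for a convex `U ∋ w`. -/
theorem projected_gradient_step_le {f : E → ℝ} {μ L : ℝ} {g y y' w : E}
    (hlower : f y + ⟪g, w - y⟫ + μ / 2 * ‖w - y‖ ^ 2 ≤ f w)
    (hupper : f y' ≤ f y + ⟪g, y' - y⟫ + L / 2 * ‖y' - y‖ ^ 2)
    (hproj : ⟪y - L⁻¹ • g - y', w - y'⟫ ≤ 0) (hL : 0 < L) :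
    f y' + L / 2 * ‖y - y'‖ ^ 2 + μ / 2 * ‖w - y‖ ^ 2 + L * ⟪y - y', w - y⟫ ≤ f w := by
  have hproj' : L * ⟪y - y', w - y'⟫ ≤ ⟪g, w - y'⟫ := by
    have h := mul_le_mul_of_nonneg_left hproj hL.le
    rw [sub_right_comm, inner_sub_left, real_inner_smul_left, mul_sub, ← mul_assoc,
      mul_inv_cancel₀ hL.ne', one_mul] at h
    linarith
  have hsplit : ⟪y - y', w - y'⟫ = ⟪y - y', w - y⟫ + ‖y - y'‖ ^ 2 := by
    rw [← real_inner_self_eq_norm_sq, ← inner_add_right]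
    congr 1; abel
  have hg : ⟪g, y' - y⟫ = ⟪g, w - y⟫ - ⟪g, w - y'⟫ := by
    rw [← inner_sub_right, sub_sub_sub_cancel_left]
  rw [norm_sub_rev y' y] at hupper
  nlinarith

theorem fast_gradient_potential_step {f : E → ℝ} {μ L θ : ℝ} (hμ : 0 < μ) (hθ0 : 0 < θ)
    (hθ1 : θ ≤ 1) (hθL : θ ^ 2 * L = μ) {u v y u' xStar : E} (hy : (1 + θ) • y = θ • v + u)
    (hu : f u' + L / 2 * ‖y - u'‖ ^ 2 + μ / 2 * ‖u - y‖ ^ 2 + L * ⟪y - u', u - y⟫ ≤ f u)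
    (hxStar : f u' + L / 2 * ‖y - u'‖ ^ 2 + μ / 2 * ‖xStar - y‖ ^ 2
      + L * ⟪y - u', xStar - y⟫ ≤ f xStar) :
    f u' - f xStar + μ / 2 * ‖u + θ⁻¹ • (u' - u) - xStar‖ ^ 2 ≤
      (1 - θ) * (f u - f xStar + μ / 2 * ‖v - xStar‖ ^ 2) := by
  set d := y - u'
  set X := v - xStar
  set Z := y - xStar
  set A := (1 - θ) • X + θ • Z
  have hθ : θ ≠ 0 := hθ0.ne'
  have hv : v = θ⁻¹ • ((1 + θ) • y - u) := by
    rw [hy, add_sub_cancel_right, inv_smul_smul₀ hθ]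
  have hnext : u + θ⁻¹ • (u' - u) - xStar = A - θ⁻¹ • d := by
    simp only [A, X, Z, d, hv]
    match_scalars <;> field_simp <;> ring
  have hcross : θ • X = (y - u) + θ • Z := by
    simp only [X, Z, hv, smul_sub, smul_inv_smul₀ hθ]
    match_scalars <;> ring
  have hexpand : μ / 2 * ‖A - θ⁻¹ • d‖ ^ 2
      = μ / 2 * ‖A‖ ^ 2 - θ * L * ⟪A, d⟫ + L / 2 * ‖d‖ ^ 2 := by
    rw [norm_sub_sq_real, real_inner_smul_right, norm_smul, Real.norm_of_nonneg (by positivity),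
      ← hθL]
    field_simp
  have hinner : θ * ⟪A, d⟫ = (1 - θ) * ⟪y - u, d⟫ + θ * ⟪Z, d⟫ := by
    have h := congrArg (⟪·, d⟫) hcross
    simp only [inner_add_left, real_inner_smul_left] at h
    rw [inner_add_left, real_inner_smul_left, real_inner_smul_left]
    linear_combination (1 - θ) * h
  have hconv := mul_le_mul_of_nonneg_left (norm_sq_convex_comb_le hθ0.le hθ1 X Z)
    (by positivity : 0 ≤ μ / 2)
  have hdu : ⟪d, u - y⟫ = -⟪y - u, d⟫ := by rw [real_inner_comm, ← inner_neg_left, neg_sub]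
  have hdx : ⟪d, xStar - y⟫ = -⟪Z, d⟫ := by rw [real_inner_comm, ← inner_neg_left, neg_sub]
  rw [hdu] at hu
  rw [hdx, norm_sub_rev xStar y] at hxStar
  have hgap : 0 ≤ (1 - θ) * (μ / 2 * ‖u - y‖ ^ 2) := by
    have := sub_nonneg.2 hθ1
    positivity
  rw [hnext, hexpand]
  linear_combination (1 - θ) * hu + θ * hxStar + hconv + hgap - L * hinner

noncomputable def extrapolated (θ : ℝ) (u : ℕ → E) : ℕ → E
  | 0 => u 0
  | k + 1 => u k + θ⁻¹ • (u (k + 1) - u k)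

theorem one_add_smul_eq_smul_extrapolated_add {θ β : ℝ} (hθ : θ ≠ 0)
    (hβ : (1 + θ) * β = 1 - θ) {u y : ℕ → E} (hu0 : u 0 = y 0)
    (hy : ∀ k, y (k + 1) = (1 + β) • u (k + 1) - β • u k) (k : ℕ) :
    (1 + θ) • y k = θ • extrapolated θ u k + u k := by
  cases k with
  | zero => rw [extrapolated, ← hu0]; module
  | succ k =>
    rw [hy, extrapolated, smul_add, smul_inv_smul₀ hθ]
    match_scalars
    · linear_combination hβ
    · linear_combination -hβ

section FastGradient

variable {f : E → ℝ} {grad : E → E} {μ L : ℝ} {U : Set E} {xStar : E} {β : ℝ} {u y : ℕ → E}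

theorem fast_gradient_potential_le {θ : ℝ} (hμ : 0 < μ) (hθ0 : 0 < θ) (hθ1 : θ ≤ 1)
    (hθL : θ ^ 2 * L = μ) (hβ : (1 + θ) * β = 1 - θ)
    (hlower : ∀ x z, f z + ⟪grad z, x - z⟫ + μ / 2 * ‖x - z‖ ^ 2 ≤ f x)
    (hupper : ∀ x z, f x ≤ f z + ⟪grad z, x - z⟫ + L / 2 * ‖x - z‖ ^ 2)
    (hxStar : xStar ∈ U) (hu0 : u 0 = y 0) (hy0 : y 0 ∈ U)
    (hproj : ∀ k, u (k + 1) ∈ U ∧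
      ∀ w ∈ U, ⟪y k - L⁻¹ • grad (y k) - u (k + 1), w - u (k + 1)⟫ ≤ 0)
    (hy : ∀ k, y (k + 1) = (1 + β) • u (k + 1) - β • u k) (k : ℕ) :
    f (u k) - f xStar + μ / 2 * ‖extrapolated θ u k - xStar‖ ^ 2 ≤
      (1 - θ) ^ k * (f (u 0) - f xStar + μ / 2 * ‖u 0 - xStar‖ ^ 2) := by
  have hL : 0 < L := pos_of_mul_pos_right (hθL ▸ hμ) (by positivity)
  have hmem : ∀ k, u k ∈ U
    | 0 => hu0 ▸ hy0
    | k + 1 => (hproj k).1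
  have hgrad_step : ∀ k, ∀ w ∈ U, f (u (k + 1)) + L / 2 * ‖y k - u (k + 1)‖ ^ 2
      + μ / 2 * ‖w - y k‖ ^ 2 + L * ⟪y k - u (k + 1), w - y k⟫ ≤ f w := fun k w hw =>
    projected_gradient_step_le (hlower w (y k)) (hupper _ _) ((hproj k).2 w hw) hL
  induction k with
  | zero => simp [extrapolated]
  | succ k ih =>
    calc _ ≤ (1 - θ) * (f (u k) - f xStar + μ / 2 * ‖extrapolated θ u k - xStar‖ ^ 2) :=
          fast_gradient_potential_step hμ hθ0 hθ1 hθL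
            (one_add_smul_eq_smul_extrapolated_add hθ0.ne' hβ hu0 hy k)
            (hgrad_step k _ (hmem k)) (hgrad_step k _ hxStar)
      _ ≤ (1 - θ) * ((1 - θ) ^ k * (f (u 0) - f xStar + μ / 2 * ‖u 0 - xStar‖ ^ 2)) := by
          gcongr
      _ = _ := by ring

theorem one_add_sqrt_div_mul_momentum {μ L : ℝ} (hμ : 0 ≤ μ) (hL : 0 < L) :
    (1 + √(μ / L)) * ((√L - √μ) / (√L + √μ)) = 1 - √(μ / L) := by
  have hsL : 0 < √L := Real.sqrt_pos.2 hL
  rw [Real.sqrt_div hμ]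
  field_simp

theorem fast_gradient_sub_le (hμ : 0 < μ) (hμL : μ ≤ L)
    (hβ : β = (√L - √μ) / (√L + √μ))
    (hlower : ∀ x z, f z + ⟪grad z, x - z⟫ + μ / 2 * ‖x - z‖ ^ 2 ≤ f x)
    (hupper : ∀ x z, f x ≤ f z + ⟪grad z, x - z⟫ + L / 2 * ‖x - z‖ ^ 2)
    (hxStar : xStar ∈ U) (hu0 : u 0 = y 0) (hy0 : y 0 ∈ U)
    (hproj : ∀ k, u (k + 1) ∈ U ∧
      ∀ w ∈ U, ⟪y k - L⁻¹ • grad (y k) - u (k + 1), w - u (k + 1)⟫ ≤ 0)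
    (hy : ∀ k, y (k + 1) = (1 + β) • u (k + 1) - β • u k) (k : ℕ) :
    f (u k) - f xStar ≤
      (1 - √(μ / L)) ^ k * (f (u 0) - f xStar + μ / 2 * ‖u 0 - xStar‖ ^ 2) := by
  have hL : 0 < L := hμ.trans_le hμL
  have hθ1 : √(μ / L) ≤ 1 := Real.sqrt_le_one.2 ((div_le_one hL).2 hμL)
  have hθL : √(μ / L) ^ 2 * L = μ := by
    rw [Real.sq_sqrt (div_pos hμ hL).le, div_mul_cancel₀ _ hL.ne']
  have hpot := fast_gradient_potential_le hμ (Real.sqrt_pos.2 (div_pos hμ hL)) hθ1 hθL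
    (hβ ▸ one_add_sqrt_div_mul_momentum hμ.le hL) hlower hupper hxStar hu0 hy0 hproj hy k
  have : 0 ≤ μ / 2 * ‖extrapolated (√(μ / L)) u k - xStar‖ ^ 2 := by positivity
  linarith

end FastGradient

end InnerProductSpace

theorem Matrix.IsSymm.quadratic_expansion {ι : Type*} [Fintype ι] {J : Matrix ι ι ℝ}
    (hJ : J.IsSymm) (q x z : ι → ℝ) :
    1 / 2 * (x ⬝ᵥ J *ᵥ x) + q ⬝ᵥ x = 1 / 2 * (z ⬝ᵥ J *ᵥ z) + q ⬝ᵥ z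
      + (J *ᵥ z + q) ⬝ᵥ (x - z) + 1 / 2 * ((x - z) ⬝ᵥ J *ᵥ (x - z)) := by
  have hsymm : x ⬝ᵥ J *ᵥ z = z ⬝ᵥ J *ᵥ x := by
    rw [dotProduct_mulVec, ← mulVec_transpose, hJ.eq, dotProduct_comm]
  simp only [mulVec_sub, dotProduct_sub, sub_dotProduct, add_dotProduct, dotProduct_comm (J *ᵥ z)]
  linear_combination (-1 / 2 : ℝ) * hsymm

theorem Matrix.IsSymm.quadratic_taylor {ι : Type*} [Fintype ι] {J : Matrix ι ι ℝ}
    (hJ : J.IsSymm) {q : ι → ℝ} {f : EuclideanSpace ℝ ι → ℝ}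
    (hf : ∀ u, f u = (1 / 2) * (u ⬝ᵥ J.mulVec u) + q ⬝ᵥ u) (x z : EuclideanSpace ℝ ι) :
    f x = f z + ⟪(WithLp.equiv 2 (ι → ℝ)).symm (J.mulVec z + q), x - z⟫
      + 1 / 2 * ((x - z).ofLp ⬝ᵥ J *ᵥ (x - z).ofLp) := by
  rw [hf, hf, hJ.quadratic_expansion q x z, EuclideanSpace.inner_eq_star_dotProduct]
  simp [dotProduct_comm]

theorem fast_gradient_method_convergence_rate_general
    (n : ℕ) (U : Set (EuclideanSpace ℝ (Fin n)))
    (hUconv : Convex ℝ U)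
    (J : Matrix (Fin n) (Fin n) ℝ) (hJsymm : J.IsSymm) (q : Fin n → ℝ)
    (lmin lmax : ℝ) (hl0 : 0 < lmin) (hll : lmin ≤ lmax)
    (hcurv : ∀ v : EuclideanSpace ℝ (Fin n),
      lmin * ‖v‖ ^ 2 ≤ v ⬝ᵥ J.mulVec v ∧ v ⬝ᵥ J.mulVec v ≤ lmax * ‖v‖ ^ 2)
    (f : EuclideanSpace ℝ (Fin n) → ℝ)
    (hf : ∀ u, f u = (1 / 2) * (u ⬝ᵥ J.mulVec u) + q ⬝ᵥ u)
    (uStar : EuclideanSpace ℝ (Fin n))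
    (huStar : uStar ∈ U ∧ ∀ u ∈ U, f uStar ≤ f u)
    (β : ℝ) (hβ : β = (Real.sqrt lmax - Real.sqrt lmin) / (Real.sqrt lmax + Real.sqrt lmin))
    (P : EuclideanSpace ℝ (Fin n) → EuclideanSpace ℝ (Fin n))
    (hP : ∀ z, IsProj U z (P z))
    (u y : ℕ → EuclideanSpace ℝ (Fin n))
    (hinit : u 1 = y 1) (hy1 : y 1 ∈ U)
    (hu : ∀ i ≥ 1, u (i + 1) = P (y i - lmax⁻¹ • (WithLp.equiv 2 (Fin n → ℝ)).symm (J.mulVec (y i) + q)))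
    (hyrec : ∀ i ≥ 1, y (i + 1) = (1 + β) • u (i + 1) - β • u i) :
    ∀ i ≥ 1, f (u i) - f uStar ≤
      (1 - Real.sqrt (lmin / lmax)) ^ (i - 1) *
        (f (u 1) - f uStar + (lmin / 2) * ‖u 1 - uStar‖ ^ 2) := by
  intro i hi
  obtain ⟨k, rfl⟩ : ∃ k, i = k + 1 := ⟨i - 1, by omega⟩
  have hlower : ∀ x z, f z + ⟪(WithLp.equiv 2 (Fin n → ℝ)).symm (J.mulVec z + q), x - z⟫
      + lmin / 2 * ‖x - z‖ ^ 2 ≤ f x := fun x z => by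
    rw [hJsymm.quadratic_taylor hf x z]
    linarith [(hcurv (x - z)).1]
  have hupper : ∀ x z, f x ≤ f z + ⟪(WithLp.equiv 2 (Fin n → ℝ)).symm (J.mulVec z + q), x - z⟫
      + lmax / 2 * ‖x - z‖ ^ 2 := fun x z => by
    rw [hJsymm.quadratic_taylor hf x z]
    linarith [(hcurv (x - z)).2]
  have hproj : ∀ k, u (k + 1 + 1) ∈ U ∧ ∀ w ∈ U, ⟪y (k + 1) - lmax⁻¹ •
      (WithLp.equiv 2 (Fin n → ℝ)).symm (J.mulVec (y (k + 1)) + q) - u (k + 1 + 1),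
        w - u (k + 1 + 1)⟫ ≤ 0 := fun k => by
    rw [hu (k + 1) (by omega)]
    exact ⟨(hP _).1, real_inner_sub_le_zero_of_forall_dist_le hUconv (hP _).1 (hP _).2⟩
  simpa using fast_gradient_sub_le (u := fun k => u (k + 1)) (y := fun k => y (k + 1)) hl0 hll hβ
    hlower hupper huStar.1 hinit hy1 hproj (fun k => hyrec (k + 1) (by omega)) k

/-- convergence rate of Nesterov's constant step scheme II (fast gradient
method) with projection for the strongly convex quadratic `f(u) = ½uᵀJu + qᵀu` over a
nonempty closed convex set `U ⊆ ℝⁿ`: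
`f(u_i) − f(u*) ≤ (1 − √(λ_min/λ_max))^{i−1} (f(u_1) − f(u*) + (λ_min/2)‖u_1 − u*‖²)`. -/
theorem fast_gradient_method_convergence_rate
    (n : ℕ) (U : Set (EuclideanSpace ℝ (Fin n)))
    (hUne : U.Nonempty) (hUcl : IsClosed U) (hUconv : Convex ℝ U)
    (J : Matrix (Fin n) (Fin n) ℝ) (hJsymm : J.IsSymm) (q : Fin n → ℝ)
    (lmin lmax : ℝ) (hl0 : 0 < lmin) (hll : lmin ≤ lmax)
    (hcurv : ∀ v : EuclideanSpace ℝ (Fin n),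
      lmin * ‖v‖ ^ 2 ≤ v ⬝ᵥ J.mulVec v ∧ v ⬝ᵥ J.mulVec v ≤ lmax * ‖v‖ ^ 2)
    (f : EuclideanSpace ℝ (Fin n) → ℝ)
    (hf : ∀ u, f u = (1 / 2) * (u ⬝ᵥ J.mulVec u) + q ⬝ᵥ u)
    (uStar : EuclideanSpace ℝ (Fin n))
    (huStar : uStar ∈ U ∧ ∀ u ∈ U, f uStar ≤ f u)
    (β : ℝ) (hβ : β = (Real.sqrt lmax - Real.sqrt lmin) / (Real.sqrt lmax + Real.sqrt lmin))
    (P : EuclideanSpace ℝ (Fin n) → EuclideanSpace ℝ (Fin n))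
    (hP : ∀ z, IsProj U z (P z))
    (u y : ℕ → EuclideanSpace ℝ (Fin n))
    (hinit : u 1 = y 1) (hy1 : y 1 ∈ U)
    (hu : ∀ i ≥ 1, u (i + 1) = P (y i - lmax⁻¹ • (WithLp.equiv 2 (Fin n → ℝ)).symm (J.mulVec (y i) + q)))
    (hyrec : ∀ i ≥ 1, y (i + 1) = (1 + β) • u (i + 1) - β • u i) :
    ∀ i ≥ 1, f (u i) - f uStar ≤
      (1 - Real.sqrt (lmin / lmax)) ^ (i - 1) *
        (f (u 1) - f uStar + (lmin / 2) * ‖u 1 - uStar‖ ^ 2) :=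
  fast_gradient_method_convergence_rate_general n U hUconv J hJsymm q lmin lmax hl0 hll hcurv f hf
    uStar huStar β hβ P hP u y hinit hy1 hu hyrec
end
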